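/- arXiv:1512.07122 — 3 statements merged into one kernel-verified Lean document; each statement's English description precedes it below -/
import Mathlib

section
/- Let (X,μ) be a probability space and f, g ∈ L^∞(X,μ) nonnegative with f ≤ g a.e. Then f* ≤ g* pointwise on [0,1). Moreover, if additionally f* = g* on [0,1) then f = g almost everywhere. -/
/-!
For `t ≥ 0`, `f*(s) ≤ t` as soon as `μ{f > t} ≤ s`, and `t ≤ f*(s)` as soon as `μ{f > t} > s`: `f*`
is a generalized inverse of the distribution function `t ↦ μ{f > t}`. Monotonicity of `f*` thus
follows from that of the distribution function. Conversely, `f* = g*` on `[0, 1)` forces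
`μ{g > t'} ≤ μ{f > t}` for all `0 ≤ t < t'`, hence, by right continuity, `μ{g > t} ≤ μ{f > t}`.
Since also `f ≤ g` a.e., the superlevel sets `{f > q}` and `{g > q}` then agree a.e. for every
rational `q`, and so `f = g` a.e.
-/

open MeasureTheory

/-- The decreasing rearrangement of `f` with respect to `μ`:
`f*(s) = sup { t ≥ 0 : μ{x : f(x) > t} > s }`. -/
noncomputable def decRe {X : Type*} [MeasurableSpace X] (μ : Measure X) (f : X → ℝ) (s : ℝ) : ℝ :=
  sSup {t : ℝ | 0 ≤ t ∧ s < (μ {x | t < f x}).toReal}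

section Distribution

variable {X : Type*} [MeasurableSpace X] {μ : Measure X} {f g : X → ℝ}

lemma measure_setOf_lt_mono_of_ae_le (hle : f ≤ᵐ[μ] g) (t : ℝ) :
    μ {x | t < f x} ≤ μ {x | t < g x} :=
  measure_mono_ae (hle.mono fun _ hx h => h.trans_le hx)

lemma measure_setOf_lt_le_of_forall_lt {t : ℝ} {m : ENNReal}
    (h : ∀ t' > t, μ {x | t' < g x} ≤ m) : μ {x | t < g x} ≤ m := by
  obtain ⟨u, hu_anti, hu_gt, hu_lim⟩ := exists_seq_strictAnti_tendsto t
  have hunion : {x | t < g x} = ⋃ n, {x | u n < g x} := by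
    ext x
    simp only [Set.mem_ofPred_eq, Set.mem_iUnion]
    refine ⟨fun hx => (hu_lim.eventually (gt_mem_nhds hx)).exists, fun ⟨n, hn⟩ => (hu_gt n).trans hn⟩
  have hmono : Monotone fun n => {x | u n < g x} :=
    fun m n hmn x hx => (hu_anti.antitone hmn).trans_lt hx
  rw [hunion, hmono.measure_iUnion]
  exact iSup_le fun n => h (u n) (hu_gt n)

lemma ae_eq_of_ae_le_of_measure_setOf_lt_le [IsFiniteMeasure μ] (hf : AEMeasurable f μ)
    (hle : f ≤ᵐ[μ] g) (h : ∀ t, μ {x | t < g x} ≤ μ {x | t < f x}) : f =ᵐ[μ] g := by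
  have hlevel : ∀ q : ℚ, μ ({x | (q : ℝ) < g x} \ {x | (q : ℝ) < f x}) = 0 := fun q =>
    (ae_eq_set.1 (ae_eq_of_ae_subset_of_measure_ge
      (hle.mono fun _ hx hqf => hqf.trans_le hx) (h q)
      (nullMeasurableSet_lt aemeasurable_const hf) (measure_ne_top μ _))).2
  refine hle.antisymm (ae_iff.2 (measure_mono_null ?_ (measure_iUnion_null hlevel)))
  intro x hx
  obtain ⟨q, hfq, hqg⟩ := exists_rat_btwn (not_le.1 hx)
  exact Set.mem_iUnion.2 ⟨q, hqg, hfq.not_gt⟩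

end Distribution

section DecreasingRearrangement

variable {X : Type*} [MeasurableSpace X] {μ : Measure X} {f g : X → ℝ} {s t : ℝ}

lemma decRe_nonneg : 0 ≤ decRe μ f s :=
  Real.sSup_nonneg fun _ ht => ht.1

lemma le_decRe {C : ℝ} (hC : ∀ x, f x ≤ C) (hs : 0 ≤ s) (ht : 0 ≤ t)
    (hts : s < (μ {x | t < f x}).toReal) : t ≤ decRe μ f s := by
  refine le_csSup ⟨C, fun u ⟨_, hus⟩ => ?_⟩ ⟨ht, hts⟩
  by_contra! hCu
  have hempty : {x | u < f x} = ∅ :=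
    Set.eq_empty_of_forall_notMem fun x hx => (hx.trans_le (hC x)).not_gt hCu
  simp only [hempty, measure_empty, ENNReal.toReal_zero] at hus
  exact hus.not_ge hs

lemma decRe_le [IsFiniteMeasure μ] (ht : 0 ≤ t) (hts : (μ {x | t < f x}).toReal ≤ s) :
    decRe μ f s ≤ t := by
  refine Real.sSup_le (fun u ⟨_, hus⟩ => ?_) ht
  by_contra! htu
  have : (μ {x | u < f x}).toReal ≤ (μ {x | t < f x}).toReal :=
    ENNReal.toReal_mono (measure_ne_top μ _) (measure_mono fun _ hx => htu.trans hx)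
  exact (hus.trans_le (this.trans hts)).false

lemma decRe_mono_of_measure_setOf_lt_le [IsFiniteMeasure μ] {C : ℝ} (hC : ∀ x, g x ≤ C)
    (hs : 0 ≤ s) (h : ∀ t, μ {x | t < f x} ≤ μ {x | t < g x}) : decRe μ f s ≤ decRe μ g s :=
  Real.sSup_le (fun t ⟨ht, hts⟩ => le_decRe hC hs ht
    (hts.trans_le (ENNReal.toReal_mono (measure_ne_top μ _) (h t)))) decRe_nonneg

lemma measure_setOf_lt_le_of_decRe_le [IsProbabilityMeasure μ] {C : ℝ} (hC : ∀ x, g x ≤ C)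
    (hdec : ∀ s ∈ Set.Ico (0 : ℝ) 1, decRe μ g s ≤ decRe μ f s) {t' : ℝ} (ht : 0 ≤ t)
    (htt' : t < t') : μ {x | t' < g x} ≤ μ {x | t < f x} := by
  by_contra! hlt
  set s := (μ {x | t < f x}).toReal
  have hs : s < (μ {x | t' < g x}).toReal := ENNReal.toReal_strict_mono (measure_ne_top μ _) hlt
  have hs_mem : s ∈ Set.Ico (0 : ℝ) 1 := ⟨ENNReal.toReal_nonneg, hs.trans_le measureReal_le_one⟩
  have hg : t' ≤ decRe μ g s := le_decRe hC hs_mem.1 (ht.trans htt'.le) hs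
  have hf : decRe μ f s ≤ t := decRe_le ht le_rfl
  exact htt'.not_ge (hg.trans ((hdec s hs_mem).trans hf))

end DecreasingRearrangement

theorem decRe_mono_and_eq_general {X : Type*} [MeasurableSpace X] (μ : Measure X)
    [IsProbabilityMeasure μ] (f g : X → ℝ) (hf : Measurable f)
    (hgb : ∃ C : ℝ, ∀ x, g x ≤ C)
    (hfpos : ∀ x, 0 ≤ f x)
    (hle : ∀ᵐ x ∂μ, f x ≤ g x) :
    (∀ s ∈ Set.Ico (0 : ℝ) 1, decRe μ f s ≤ decRe μ g s) ∧
    (Set.EqOn (decRe μ f) (decRe μ g) (Set.Ico (0 : ℝ) 1) → f =ᵐ[μ] g) := by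
  obtain ⟨C, hC⟩ := hgb
  refine ⟨fun s hs => decRe_mono_of_measure_setOf_lt_le hC hs.1
    (measure_setOf_lt_mono_of_ae_le hle), fun hEq => ?_⟩
  refine ae_eq_of_ae_le_of_measure_setOf_lt_le hf.aemeasurable hle fun t => ?_
  rcases lt_or_ge t 0 with ht | ht
  · have huniv : {x | t < f x} = Set.univ :=
      Set.eq_univ_of_forall fun x => ht.trans_le (hfpos x)
    exact huniv ▸ measure_mono (Set.subset_univ _)
  · exact measure_setOf_lt_le_of_forall_lt fun t' htt' =>
      measure_setOf_lt_le_of_decRe_le hC (fun s hs => (hEq hs).ge) ht htt'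

/-- monotonicity of the decreasing rearrangement, and the case of equality. -/
theorem decRe_mono_and_eq {X : Type*} [MeasurableSpace X] (μ : Measure X)
    [IsProbabilityMeasure μ] (f g : X → ℝ) (hf : Measurable f) (hg : Measurable g)
    (hfb : ∃ C : ℝ, ∀ x, f x ≤ C) (hgb : ∃ C : ℝ, ∀ x, g x ≤ C)
    (hfpos : ∀ x, 0 ≤ f x) (hgpos : ∀ x, 0 ≤ g x)
    (hle : ∀ᵐ x ∂μ, f x ≤ g x) :
    (∀ s ∈ Set.Ico (0 : ℝ) 1, decRe μ f s ≤ decRe μ g s) ∧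
    (Set.EqOn (decRe μ f) (decRe μ g) (Set.Ico (0 : ℝ) 1) → f =ᵐ[μ] g) :=
  decRe_mono_and_eq_general μ f g hf hgb hfpos hle
end

section
/- Let γ ∈ ℝ₊^n, d ≤ n, and let L_d(γ) = (max{γ↓_i, c})_{i=1}^d where c ≥ 0 is determined by Σ_{i=1}^d max{γ↓_i, c} = Σ_{i=1}^n γ_i. Then L_d(γ) is a ≺-minimizer: for every β ∈ ℝ₊^d with γ ≺ β, one has L_d(γ) ≺ β. -/
/-!
Write `x m` and `y m` for the `m`-th largest entries of `γ` and `β`. Both sequences are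
nonincreasing, since `kMaxSum` is concave in `k`. To show `∑_{m<k} max (x m) c ≤ ∑_{m<k} y m`
there are two cases. If `y m ≥ c` for all `m < k`, induct on `k`: a last term equal to `c` is
paid for by `y (k-1) ≥ c`, and if no term equals `c` the claim is `γ ≺ β`. If some `y m < c`
with `m < k`, then `y < c` on the whole tail `[k, d)`. The tail of the waterfilled vector is
`≥ c` termwise, and the two vectors have the same total, so the bound follows by subtraction.
-/

/-- Sum of the `k` largest entries of a finite real vector. -/
noncomputable def kMaxSum {n : ℕ} (a : Fin n → ℝ) (k : ℕ) : ℝ :=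
  sSup ((fun S : Finset (Fin n) => ∑ i ∈ S, a i) '' {S : Finset (Fin n) | S.card = k})

/-- Vector majorization `a ≺ b` (possibly different lengths): partial sums of the
decreasing rearrangements compare, with equal total sums. -/
def Maj {n d : ℕ} (a : Fin n → ℝ) (b : Fin d → ℝ) : Prop :=
  (∀ k : ℕ, k ≤ min n d → kMaxSum a k ≤ kMaxSum b k) ∧ (∑ i, a i) = ∑ i, b i

/-- The decreasing rearrangement of a finite vector. -/
noncomputable def dsort {n : ℕ} (a : Fin n → ℝ) (i : Fin n) : ℝ :=
  kMaxSum a (i + 1) - kMaxSum a i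

open Finset

section Sequences

variable {x y : ℕ → ℝ} {c : ℝ}

lemma sum_range_max_le_of_const_le {k : ℕ} (hx : AntitoneOn x (Set.Iio k))
    (hy : ∀ m < k, c ≤ y m)
    (hxy : ∀ j ≤ k, ∑ m ∈ range j, x m ≤ ∑ m ∈ range j, y m) :
    ∑ m ∈ range k, max (x m) c ≤ ∑ m ∈ range k, y m := by
  induction k with
  | zero => simp
  | succ k ih =>
    by_cases hxk : x k ≤ c
    · rw [sum_range_succ, sum_range_succ, max_eq_right hxk]
      have hprev := ih (hx.mono (Set.Iio_subset_Iio k.le_succ))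
        (fun m hm => hy m (by omega)) (fun j hj => hxy j (by omega))
      linarith [hy k k.lt_succ_self]
    · have hmax : ∀ m ∈ range (k + 1), max (x m) c = x m := fun m hm => by
        have hm' := mem_range.mp hm
        exact max_eq_left <| (not_le.mp hxk).le.trans <|
          hx (Set.mem_Iio.mpr hm') k.lt_succ_self (Nat.lt_succ_iff.mp hm')
      rw [sum_congr rfl hmax]
      exact hxy (k + 1) le_rfl

lemma sum_Ico_le_sum_Ico_max_of_lt_const {d k m : ℕ} (hy : AntitoneOn y (Set.Iio d))
    (hmk : m < k) (hkd : k ≤ d) (hym : y m < c) :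
    ∑ i ∈ Ico k d, y i ≤ ∑ i ∈ Ico k d, max (x i) c := by
  have hy_le : ∀ i ∈ Ico k d, y i ≤ c := fun i hi => by
    obtain ⟨hki, hid⟩ := mem_Ico.mp hi
    exact (hy (Set.mem_Iio.mpr (by omega)) (Set.mem_Iio.mpr hid) (by omega)).trans hym.le
  calc ∑ i ∈ Ico k d, y i ≤ ∑ _i ∈ Ico k d, c := sum_le_sum hy_le
    _ ≤ ∑ i ∈ Ico k d, max (x i) c := sum_le_sum fun i _ => le_max_right _ _

lemma sum_range_max_le_of_sum_range_le {d : ℕ} (hx : AntitoneOn x (Set.Iio d))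
    (hy : AntitoneOn y (Set.Iio d))
    (hxy : ∀ j ≤ d, ∑ m ∈ range j, x m ≤ ∑ m ∈ range j, y m)
    (htotal : ∑ m ∈ range d, max (x m) c = ∑ m ∈ range d, y m) {k : ℕ} (hkd : k ≤ d) :
    ∑ m ∈ range k, max (x m) c ≤ ∑ m ∈ range k, y m := by
  by_cases hyc : ∃ m < k, y m < c
  · obtain ⟨m, hmk, hym⟩ := hyc
    have htail := sum_Ico_le_sum_Ico_max_of_lt_const (x := x) hy hmk hkd hym
    rw [sum_Ico_eq_sub _ hkd, sum_Ico_eq_sub _ hkd] at htail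
    linarith
  · exact sum_range_max_le_of_const_le (hx.mono (Set.Iio_subset_Iio hkd))
      (fun m hm => not_lt.mp fun h => hyc ⟨m, hm, h⟩) fun j hj => hxy j (hj.trans hkd)

end Sequences

lemma Fin.val_le_of_strictMono {k n : ℕ} {e : Fin k → Fin n} (he : StrictMono e) (i : Fin k) :
    (i : ℕ) ≤ e i := by
  obtain ⟨m, hm⟩ := i
  induction m with
  | zero => exact Nat.zero_le _
  | succ m ih =>
    have hlt : e ⟨m, by omega⟩ < e ⟨m + 1, hm⟩ := he (Fin.mk_lt_mk.mpr m.lt_succ_self)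
    exact (ih (by omega)).trans_lt hlt

namespace kMaxSum

variable {n : ℕ} (a : Fin n → ℝ)

lemma sum_le {S : Finset (Fin n)} {k : ℕ} (hS : S.card = k) : ∑ i ∈ S, a i ≤ kMaxSum a k :=
  le_csSup ((Set.toFinite _).image _).bddAbove ⟨S, hS, rfl⟩

lemma exists_eq_sum {k : ℕ} (hk : k ≤ n) :
    ∃ S : Finset (Fin n), S.card = k ∧ kMaxSum a k = ∑ i ∈ S, a i := by
  obtain ⟨S, -, hS⟩ := exists_subset_card_eq (show k ≤ (univ : Finset (Fin n)).card by simpa)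
  have hne : {S : Finset (Fin n) | S.card = k}.Nonempty := ⟨S, hS⟩
  obtain ⟨T, hT, hval⟩ :=
    (hne.image fun S => ∑ i ∈ S, a i).csSup_mem ((Set.toFinite _).image _)
  exact ⟨T, hT, hval.symm⟩

lemma zero : kMaxSum a 0 = 0 := by
  obtain ⟨S, hS, hval⟩ := exists_eq_sum a (Nat.zero_le n)
  rw [hval, card_eq_zero.mp hS, sum_empty]

lemma self_eq_sum : kMaxSum a n = ∑ i, a i := by
  obtain ⟨S, hS, hval⟩ := exists_eq_sum a le_rfl
  rw [hval, eq_univ_of_card S (by simpa using hS)]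

lemma sum_range_sub (k : ℕ) :
    ∑ m ∈ range k, (kMaxSum a (m + 1) - kMaxSum a m) = kMaxSum a k := by
  rw [Finset.sum_range_sub (kMaxSum a), zero, sub_zero]

/-- Move an element of an optimal `(k+2)`-set that is missing from an optimal `k`-set over to
the latter. -/
lemma add_two_add_le {k : ℕ} (hk : k + 2 ≤ n) :
    kMaxSum a (k + 2) + kMaxSum a k ≤ kMaxSum a (k + 1) + kMaxSum a (k + 1) := by
  obtain ⟨S, hS, hvS⟩ := exists_eq_sum a hk
  obtain ⟨T, hT, hvT⟩ := exists_eq_sum a (by omega : k ≤ n)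
  obtain ⟨x, hxS, hxT⟩ := not_subset.mp fun h : S ⊆ T => by
    have := card_le_card h; omega
  have hS' := sum_le a (show (S.erase x).card = k + 1 by rw [card_erase_of_mem hxS, hS]; rfl)
  have hT' := sum_le a (show (insert x T).card = k + 1 by rw [card_insert_of_notMem hxT, hT])
  rw [sum_insert hxT] at hT'
  rw [hvS, hvT, ← sum_erase_add S a hxS]
  linarith

lemma antitoneOn_sub : AntitoneOn (fun m => kMaxSum a (m + 1) - kMaxSum a m) (Set.Iio n) := by
  intro i _ j hj hij
  induction j, hij using Nat.le_induction with
  | base => exact le_rfl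
  | succ m him ih =>
    have hm := Set.mem_Iio.mp hj
    linarith [add_two_add_le a (show m + 2 ≤ n by omega), ih (Set.mem_Iio.mpr (by omega))]

lemma eq_sum_of_antitone (ha : Antitone a) {k : ℕ} (hk : k ≤ n) :
    kMaxSum a k = ∑ i : Fin k, a (Fin.castLE hk i) := by
  have hinit : (univ.map (Fin.castLEEmb hk)).card = k := by simp
  refine le_antisymm ?_ (by simpa using sum_le a hinit)
  obtain ⟨S, hS, hval⟩ := exists_eq_sum a hk
  rw [hval, ← image_orderEmbOfFin_univ S hS,
    sum_image fun _ _ _ _ h => (S.orderEmbOfFin hS).injective h]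
  exact sum_le_sum fun i _ =>
    ha (Fin.val_le_of_strictMono (S.orderEmbOfFin hS).strictMono i)

end kMaxSum

theorem discrete_waterfilling_minimizer_general {n d : ℕ} (hd : d ≤ n) (γ : Fin n → ℝ)
    (c : ℝ)
    (hsum : (∑ i : Fin d, max (dsort γ (Fin.castLE hd i)) c) = ∑ i, γ i) :
    ∀ β : Fin d → ℝ, (∀ i, 0 ≤ β i) → Maj γ β →
      Maj (fun i : Fin d => max (dsort γ (Fin.castLE hd i)) c) β := by
  intro β _ hγβ
  have hx := (kMaxSum.antitoneOn_sub γ).mono (Set.Iio_subset_Iio hd)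
  have hL : Antitone fun i : Fin d => max (dsort γ (Fin.castLE hd i)) c := fun i j hij =>
    max_le_max_right c (hx (Set.mem_Iio.mpr i.2) (Set.mem_Iio.mpr j.2) hij)
  refine ⟨fun k hk => ?_, hsum.trans hγβ.2⟩
  rw [min_self] at hk
  rw [kMaxSum.eq_sum_of_antitone _ hL hk, ← kMaxSum.sum_range_sub β]
  refine (Fin.sum_univ_eq_sum_range (fun m => max (kMaxSum γ (m + 1) - kMaxSum γ m) c) k).trans_le
    (sum_range_max_le_of_sum_range_le hx (kMaxSum.antitoneOn_sub β) (fun j hj => ?_) ?_ hk)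
  · rw [kMaxSum.sum_range_sub, kMaxSum.sum_range_sub]
    exact hγβ.1 j (by omega)
  · rw [kMaxSum.sum_range_sub, kMaxSum.self_eq_sum, ← hγβ.2, ← hsum]
    exact (Fin.sum_univ_eq_sum_range (fun m => max (kMaxSum γ (m + 1) - kMaxSum γ m) c) d).symm

/-- the discrete waterfilling `L_d(γ)` is a `≺`-minimizer among all
`β ∈ ℝ₊^d` with `γ ≺ β`. -/
theorem discrete_waterfilling_minimizer {n d : ℕ} (hd : d ≤ n) (γ : Fin n → ℝ)
    (hγ : ∀ i, 0 ≤ γ i) (c : ℝ) (hc : 0 ≤ c)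
    (hsum : (∑ i : Fin d, max (dsort γ (Fin.castLE hd i)) c) = ∑ i, γ i) :
    ∀ β : Fin d → ℝ, (∀ i, 0 ≤ β i) → Maj γ β →
      Maj (fun i : Fin d => max (dsort γ (Fin.castLE hd i)) c) β :=
  discrete_waterfilling_minimizer_general hd γ c hsum
end

section
/- Let α ∈ ℝ_{>0}^n, p ∈ ℝ_{>0}^m, and d₁ < ⋯ < d_m positive integers. Define W_{α,p} = { B ∈ ℝ₊^{m×n} : pᵀB = α } and, for B ∈ W_{α,p}, let M(B) = { (λ_i)_{i=1}^m : λ_i ∈ (ℝ₊^{d_i})↓ and R_i(B) ≺ λ_i for each i }, where R_i(B) is the i-th row. Then the set Λ_{α,p}(δ) = ⋃_{B ∈ W_{α,p}} M(B) is convex. -/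
open Finset

section kMaxSum

variable {n : ℕ}

lemma le_kMaxSum (a : Fin n → ℝ) {S : Finset (Fin n)} {k : ℕ} (hS : #S = k) :
    ∑ i ∈ S, a i ≤ kMaxSum a k :=
  le_csSup ((Set.toFinite _).image _).bddAbove ⟨S, hS, rfl⟩

lemma kMaxSum_le {a : Fin n → ℝ} {k : ℕ} (hk : k ≤ n) {c : ℝ}
    (h : ∀ S : Finset (Fin n), #S = k → ∑ i ∈ S, a i ≤ c) : kMaxSum a k ≤ c := by
  obtain ⟨S₀, -, hS₀⟩ := exists_subset_card_eq (show k ≤ #(univ : Finset (Fin n)) by simpa)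
  exact csSup_le ⟨_, S₀, hS₀, rfl⟩ (by rintro _ ⟨S, hS, rfl⟩; exact h S hS)

lemma kMaxSum_smul_add_smul_le (a b : Fin n → ℝ) {k : ℕ} (hk : k ≤ n) {t s : ℝ}
    (ht : 0 ≤ t) (hs : 0 ≤ s) :
    kMaxSum (t • a + s • b) k ≤ t * kMaxSum a k + s * kMaxSum b k := by
  refine kMaxSum_le hk fun S hS => ?_
  have hsum : ∑ i ∈ S, (t • a + s • b) i = t * ∑ i ∈ S, a i + s * ∑ i ∈ S, b i := by
    simp only [Pi.add_apply, Pi.smul_apply, smul_eq_mul, sum_add_distrib, mul_sum]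
  rw [hsum]
  gcongr <;> exact le_kMaxSum _ hS

lemma Fin.val_le_val_of_strictMono {k : ℕ} {g : Fin k → Fin n} (hg : StrictMono g) :
    ∀ j : Fin k, (j : ℕ) ≤ g j
  | ⟨0, _⟩ => Nat.zero_le _
  | ⟨j + 1, hj⟩ =>
    (Fin.val_le_val_of_strictMono hg ⟨j, by omega⟩).trans_lt (hg (Nat.lt_succ_self j))

lemma Antitone.kMaxSum_eq {a : Fin n → ℝ} (ha : Antitone a) {k : ℕ} (hk : k ≤ n) :
    kMaxSum a k = ∑ j : Fin k, a (Fin.castLE hk j) := by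
  refine le_antisymm (kMaxSum_le hk fun S hS => ?_) ?_
  · -- the `j`-th smallest index of `S` is at least `j`, so its entry is at most `a j`
    rw [← map_orderEmbOfFin_univ S hS, sum_map]
    exact sum_le_sum fun j _ =>
      ha (Fin.val_le_val_of_strictMono (S.orderEmbOfFin hS).strictMono j)
  · calc ∑ j : Fin k, a (Fin.castLE hk j)
        = ∑ i ∈ univ.map (Fin.castLEEmb hk), a i := by rw [sum_map]; rfl
      _ ≤ kMaxSum a k := le_kMaxSum a (by simp)

lemma Antitone.kMaxSum_smul_add_smul {a b : Fin n → ℝ} (ha : Antitone a) (hb : Antitone b)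
    {k : ℕ} (hk : k ≤ n) {t s : ℝ} (ht : 0 ≤ t) (hs : 0 ≤ s) :
    kMaxSum (t • a + s • b) k = t * kMaxSum a k + s * kMaxSum b k := by
  have hab : Antitone (t • a + s • b) := (ha.const_smul ht).add (hb.const_smul hs)
  rw [hab.kMaxSum_eq hk, ha.kMaxSum_eq hk, hb.kMaxSum_eq hk, mul_sum, mul_sum,
    ← sum_add_distrib]
  rfl

end kMaxSum

lemma Maj.smul_add_smul {n d : ℕ} {a b : Fin n → ℝ} {x y : Fin d → ℝ}
    (hax : Maj a x) (hby : Maj b y) (hx : Antitone x) (hy : Antitone y)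
    {t s : ℝ} (ht : 0 ≤ t) (hs : 0 ≤ s) : Maj (t • a + s • b) (t • x + s • y) := by
  refine ⟨fun k hk => ?_, ?_⟩
  · have hkn : k ≤ n := hk.trans (min_le_left _ _)
    have hkd : k ≤ d := hk.trans (min_le_right _ _)
    calc kMaxSum (t • a + s • b) k ≤ t * kMaxSum a k + s * kMaxSum b k :=
          kMaxSum_smul_add_smul_le a b hkn ht hs
      _ ≤ t * kMaxSum x k + s * kMaxSum y k := by gcongr <;> [exact hax.1 k hk; exact hby.1 k hk]
      _ = kMaxSum (t • x + s • y) k := (hx.kMaxSum_smul_add_smul hy hkd ht hs).symm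
  · simp only [Pi.add_apply, Pi.smul_apply, smul_eq_mul, sum_add_distrib, ← mul_sum,
      hax.2, hby.2]

theorem Lambda_convex_general {m n : ℕ} (α : Fin n → ℝ)
    (p : Fin m → ℝ) (d : Fin m → ℕ) :
    Convex ℝ { Λ : (i : Fin m) → (Fin (d i) → ℝ) |
      ∃ B : Matrix (Fin m) (Fin n) ℝ,
        (∀ i j, 0 ≤ B i j) ∧ (∀ j, (∑ i, p i * B i j) = α j) ∧
        ∀ i : Fin m, (∀ k, 0 ≤ Λ i k) ∧ Antitone (Λ i) ∧ Maj (B i) (Λ i) } := by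
  rintro x ⟨B, hB₀, hBα, hx⟩ y ⟨C, hC₀, hCα, hy⟩ t s ht hs hts
  refine ⟨t • B + s • C, fun i j => ?_, fun j => ?_, fun i => ?_⟩
  · have := hB₀ i j
    have := hC₀ i j
    simp only [Matrix.add_apply, Matrix.smul_apply, smul_eq_mul]
    positivity
  · calc ∑ i, p i * (t • B + s • C) i j = t * ∑ i, p i * B i j + s * ∑ i, p i * C i j := by
          simp only [Matrix.add_apply, Matrix.smul_apply, smul_eq_mul, mul_sum,
            ← sum_add_distrib]
          exact sum_congr rfl fun i _ => by ring
      _ = α j := by rw [hBα, hCα, ← add_mul, hts, one_mul]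
  · obtain ⟨hx₀, hx_anti, hBx⟩ := hx i
    obtain ⟨hy₀, hy_anti, hCy⟩ := hy i
    refine ⟨fun k => ?_, (hx_anti.const_smul ht).add (hy_anti.const_smul hs),
      hBx.smul_add_smul hCy hx_anti hy_anti ht hs⟩
    have := hx₀ k
    have := hy₀ k
    simp only [Pi.add_apply, Pi.smul_apply, smul_eq_mul]
    positivity

/-- the set `Λ_{α,p}(δ)` of spectra compatible with the weighted
partitions `W_{α,p}` is convex. -/
theorem Lambda_convex {m n : ℕ} (α : Fin n → ℝ) (hα : ∀ j, 0 < α j)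
    (p : Fin m → ℝ) (hp : ∀ i, 0 < p i) (d : Fin m → ℕ) (hd : ∀ i, 0 < d i)
    (hmono : StrictMono d) :
    Convex ℝ { Λ : (i : Fin m) → (Fin (d i) → ℝ) |
      ∃ B : Matrix (Fin m) (Fin n) ℝ,
        (∀ i j, 0 ≤ B i j) ∧ (∀ j, (∑ i, p i * B i j) = α j) ∧
        ∀ i : Fin m, (∀ k, 0 ≤ Λ i k) ∧ Antitone (Λ i) ∧ Maj (B i) (Λ i) } :=
  Lambda_convex_general α p d
end
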